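/- arXiv:0909.3935 — 3 statements merged into one kernel-verified Lean document; each statement's English description precedes it below -/
import Mathlib

section
/- A permutation w ∈ S_{m+p} satisfies -p ≤ w(i) - i ≤ m for all i if and only if w ≤ w₀ in the Bruhat order, where w₀ is the permutation sending i ↦ m+i for 1 ≤ i ≤ p and p+j ↦ j for 1 ≤ j ≤ m. -/
open Finset

private lemma finCardAux {N : ℕ} (P : Fin N → Prop) [DecidablePred P] (l u : ℕ)
    (h : ∀ a : Fin N, P a ↔ l ≤ (a : ℕ) ∧ (a : ℕ) < u) :
    (univ.filter P).card = min u N - l := by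
  have h1 : (univ.filter P).card = ((range N).filter fun n => l ≤ n ∧ n < u).card := by
    refine Finset.card_bij (fun a _ => (a : ℕ)) ?_ ?_ ?_
    · intro a ha
      simp only [mem_filter, mem_univ, true_and] at ha
      simp only [mem_filter, mem_range]
      exact ⟨a.isLt, (h a).1 ha⟩
    · intro a _ b _ hab; exact Fin.val_injective hab
    · intro n hn
      simp only [mem_filter, mem_range] at hn
      exact ⟨⟨n, hn.1⟩, by simp only [mem_filter, mem_univ, true_and, h]; exact hn.2, rfl⟩
  rw [h1]
  have h2 : ((range N).filter fun n => l ≤ n ∧ n < u) = Ico l (min u N) := by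
    ext n; simp only [mem_filter, mem_range, mem_Ico]; omega
  rw [h2, Nat.card_Ico]

private lemma finCardLe {N : ℕ} (P : Fin N → Prop) [DecidablePred P] (l u : ℕ)
    (h : ∀ a : Fin N, P a → l ≤ (a : ℕ) ∧ (a : ℕ) < u) :
    (univ.filter P).card ≤ min u N - l := by
  calc (univ.filter P).card ≤ (univ.filter fun a : Fin N => l ≤ (a:ℕ) ∧ (a:ℕ) < u).card := by
        apply card_le_card
        intro a ha
        simp only [mem_filter, mem_univ, true_and] at *
        exact h a ha
    _ = min u N - l := finCardAux _ l u (fun a => Iff.rfl)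

private lemma finCardImageLe {N : ℕ} (v : Equiv.Perm (Fin N)) (P : Fin N → Prop)
    [DecidablePred P] (j : ℕ) (h : ∀ a, P a → j ≤ ((v a : Fin N) : ℕ)) :
    (univ.filter P).card ≤ N - j := by
  have h1 : (univ.filter P).card = ((univ.filter P).image v).card :=
    (card_image_of_injective _ v.injective).symm
  rw [h1]
  calc ((univ.filter P).image v).card
      ≤ (univ.filter fun b : Fin N => j ≤ (b:ℕ) ∧ (b:ℕ) < N).card := by
        apply card_le_card
        intro b hb
        simp only [mem_image, mem_filter, mem_univ, true_and] at *
        obtain ⟨a, ha, rfl⟩ := hb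
        exact ⟨h a ha, (v a).isLt⟩
    _ = N - j := by rw [finCardAux _ j N fun a => Iff.rfl]; simp

private lemma w0card (m p : ℕ) (w₀ : Equiv.Perm (Fin (m + p)))
    (hw₀ : ∀ i : Fin (m + p), ((w₀ i : ℕ)) = if (i : ℕ) < p then (i : ℕ) + m else (i : ℕ) - p)
    (i j : Fin (m+p)) :
    (univ.filter (fun a : Fin (m+p) => a ≤ i ∧ j ≤ w₀ a)).card
      = (min (min ((i:ℕ)+1) p) (m+p) - ((j:ℕ) - m)) + (min ((i:ℕ)+1) (m+p) - (p + (j:ℕ))) := by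
  have hsplit := Finset.card_filter_add_card_filter_not
    (s := univ.filter (fun a : Fin (m+p) => a ≤ i ∧ j ≤ w₀ a))
    (p := fun a => (a:ℕ) < p)
  rw [filter_filter, filter_filter] at hsplit
  have e1 : (univ.filter (fun a : Fin (m+p) => (a ≤ i ∧ j ≤ w₀ a) ∧ (a:ℕ) < p)).card
      = min (min ((i:ℕ)+1) p) (m+p) - ((j:ℕ) - m) := by
    apply finCardAux
    intro a
    have hv := hw₀ a
    simp only [Fin.le_def]
    by_cases hap : (a:ℕ) < p
    · rw [if_pos hap] at hv
      have := a.isLt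
      omega
    · rw [if_neg hap] at hv
      omega
  have e2 : (univ.filter (fun a : Fin (m+p) => (a ≤ i ∧ j ≤ w₀ a) ∧ ¬ (a:ℕ) < p)).card
      = min ((i:ℕ)+1) (m+p) - (p + (j:ℕ)) := by
    apply finCardAux
    intro a
    have hv := hw₀ a
    simp only [Fin.le_def]
    by_cases hap : (a:ℕ) < p
    · rw [if_pos hap] at hv
      omega
    · rw [if_neg hap] at hv
      have := a.isLt
      omega
  omega

/-- The Bruhat order on the symmetric group `S_N`, characterized by the standard
rank-matrix (tableau) criterion: `v ≤ w` iff for all `i, j`,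
`#{a ≤ i : v a ≥ j} ≤ #{a ≤ i : w a ≥ j}`. -/
def BruhatLE {N : ℕ} (v w : Equiv.Perm (Fin N)) : Prop :=
  ∀ i j : Fin N,
    (Finset.univ.filter (fun a : Fin N => a ≤ i ∧ j ≤ v a)).card ≤
    (Finset.univ.filter (fun a : Fin N => a ≤ i ∧ j ≤ w a)).card

/-- A permutation `w ∈ S_{m+p}` satisfies `-p ≤ w(i) - i ≤ m` for all `i`
if and only if `w ≤ w₀` in the Bruhat order, where `w₀` sends `i ↦ m+i` for `1 ≤ i ≤ p`
and `p+j ↦ j` for `1 ≤ j ≤ m` (written here with 0-based indices `Fin (m+p)`). -/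
theorem restricted_iff_bruhat_le (m p : ℕ) (hm : 0 < m) (hp : 0 < p)
    (w₀ : Equiv.Perm (Fin (m + p)))
    (hw₀ : ∀ i : Fin (m + p), ((w₀ i : ℕ)) = if (i : ℕ) < p then (i : ℕ) + m else (i : ℕ) - p)
    (w : Equiv.Perm (Fin (m + p))) :
    (∀ i : Fin (m + p), -(p : ℤ) ≤ ((w i : ℕ) : ℤ) - ((i : ℕ) : ℤ) ∧
      ((w i : ℕ) : ℤ) - ((i : ℕ) : ℤ) ≤ (m : ℤ)) ↔ BruhatLE w w₀ := by
  constructor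
  · intro hwin i j
    have hup : ∀ a : Fin (m+p), (w a : ℕ) ≤ (a:ℕ) + m := fun a => by
      have := (hwin a).2; omega
    have hlo : ∀ a : Fin (m+p), (a:ℕ) ≤ (w a : ℕ) + p := fun a => by
      have := (hwin a).1; omega
    rw [w0card m p w₀ hw₀ i j]
    have b3 : (univ.filter (fun a : Fin (m+p) => a ≤ i ∧ j ≤ w a)).card
        ≤ min ((i:ℕ)+1) (m+p) - ((j:ℕ) - m) := by
      apply finCardLe
      rintro a ⟨h1, h2⟩
      rw [Fin.le_def] at h1 h2
      have := hup a
      have := a.isLt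
      omega
    have b2 : (univ.filter (fun a : Fin (m+p) => a ≤ i ∧ j ≤ w a)).card ≤ (m+p) - (j:ℕ) := by
      apply finCardImageLe w
      rintro a ⟨h1, h2⟩
      rw [Fin.le_def] at h2; exact h2
    have b4 : (univ.filter (fun a : Fin (m+p) => a ≤ i ∧ j ≤ w a)).card
        + ((m+p) - max ((i:ℕ)+1) ((j:ℕ)+p)) ≤ (m+p) - (j:ℕ) := by
      have hVcard : (univ.filter (fun a : Fin (m+p) => max ((i:ℕ)+1) ((j:ℕ)+p) ≤ (a:ℕ))).card
          = min (m+p) (m+p) - max ((i:ℕ)+1) ((j:ℕ)+p) :=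
        finCardAux _ _ (m+p) (fun a => ⟨fun h => ⟨h, a.isLt⟩, fun h => h.1⟩)
      have hdisj : Disjoint (univ.filter (fun a : Fin (m+p) => a ≤ i ∧ j ≤ w a))
          (univ.filter (fun a : Fin (m+p) => max ((i:ℕ)+1) ((j:ℕ)+p) ≤ (a:ℕ))) := by
        rw [Finset.disjoint_left]
        intro a ha hb
        simp only [mem_filter, mem_univ, true_and, Fin.le_def] at ha hb
        omega
      have hmin : min (m+p) (m+p) = m + p := min_self _
      rw [hmin] at hVcard
      rw [← hVcard, ← card_union_of_disjoint hdisj, ← Finset.filter_or]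
      apply finCardImageLe w
      rintro a (⟨h1, h2⟩ | h)
      · rw [Fin.le_def] at h2; exact h2
      · have := hlo a; omega
    have hi := i.isLt; have hj := j.isLt
    omega
  · intro hb i
    have hup : (w i : ℕ) ≤ (i:ℕ) + m := by
      by_cases hcase : (i:ℕ) + m + 1 < m + p
      · obtain ⟨j, hjv⟩ : ∃ x : Fin (m+p), (x:ℕ) = (i:ℕ)+m+1 := ⟨⟨_, hcase⟩, rfl⟩
        have h0 : (univ.filter (fun a : Fin (m+p) => a ≤ i ∧ j ≤ w₀ a)).card = 0 := by
          rw [w0card m p w₀ hw₀ i j]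
          have := i.isLt
          omega
        have h1 := hb i j
        rw [h0, Nat.le_zero, card_eq_zero, filter_eq_empty_iff] at h1
        have h2 := h1 (mem_univ i)
        rw [Fin.le_def, Fin.le_def] at h2
        push_neg at h2
        have h3 := h2 le_rfl
        omega
      · have := (w i).isLt; omega
    have hlo : (i:ℕ) ≤ (w i : ℕ) + p := by
      by_cases hcase : p < (i:ℕ)
      · have hi1 : (i:ℕ) - 1 < m + p := by have := i.isLt; omega
        have hip : (i:ℕ) - p < m + p := by have := i.isLt; omega
        obtain ⟨i', hiv⟩ : ∃ x : Fin (m+p), (x:ℕ) = (i:ℕ)-1 := ⟨⟨_, hi1⟩, rfl⟩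
        obtain ⟨j', hjv⟩ : ∃ x : Fin (m+p), (x:ℕ) = (i:ℕ)-p := ⟨⟨_, hip⟩, rfl⟩
        have h1 := hb i' j'
        rw [w0card m p w₀ hw₀ i' j'] at h1
        have hS : (univ.filter (fun a : Fin (m+p) => a ≤ i' ∧ j' ≤ w a)).card ≤ p := by
          have := i.isLt
          omega
        have hsplit := Finset.card_filter_add_card_filter_not
          (s := univ.filter (fun x : Fin (m+p) => x ≤ i')) (p := fun x => j' ≤ w x)
        rw [filter_filter, filter_filter] at hsplit
        have hIic : (univ.filter (fun x : Fin (m+p) => x ≤ i')).card = (i:ℕ) := by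
          rw [finCardAux _ 0 ((i:ℕ)) (fun a => by
            rw [Fin.le_def, hiv]; constructor
            · intro h; exact ⟨Nat.zero_le _, by omega⟩
            · intro h; omega)]
          have := i.isLt
          omega
        have hT'card : (univ.filter (fun x : Fin (m+p) => (w x : ℕ) < (i:ℕ)-p)).card
            = (i:ℕ)-p := by
          have hbij : (univ.filter (fun x : Fin (m+p) => (w x : ℕ) < (i:ℕ)-p)).card
              = (univ.filter (fun b : Fin (m+p) => (b:ℕ) < (i:ℕ)-p)).card := by
            refine Finset.card_bij (fun a _ => w a) ?_ ?_ ?_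
            · intro a ha
              simp only [mem_filter, mem_univ, true_and] at ha ⊢
              exact ha
            · intro a _ b _ hab; exact w.injective hab
            · intro b hbmem
              simp only [mem_filter, mem_univ, true_and] at hbmem
              exact ⟨w.symm b, by
                simp only [mem_filter, mem_univ, true_and, Equiv.apply_symm_apply]
                exact hbmem, w.apply_symm_apply b⟩
          rw [hbij, finCardAux _ 0 ((i:ℕ)-p)
            (fun a => ⟨fun h => ⟨Nat.zero_le _, h⟩, fun h => h.2⟩)]
          have := i.isLt
          omega
        have hsub : (univ.filter (fun x : Fin (m+p) => x ≤ i' ∧ ¬ j' ≤ w x))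
            ⊆ (univ.filter (fun x : Fin (m+p) => (w x : ℕ) < (i:ℕ)-p)) := by
          intro x hx
          simp only [mem_filter, mem_univ, true_and] at hx ⊢
          obtain ⟨hx1, hx2⟩ := hx
          rw [Fin.le_def, hjv] at hx2
          omega
        have hcardle : (univ.filter (fun x : Fin (m+p) => (w x : ℕ) < (i:ℕ)-p)).card
            ≤ (univ.filter (fun x : Fin (m+p) => x ≤ i' ∧ ¬ j' ≤ w x)).card := by
          omega
        have heqset := Finset.eq_of_subset_of_card_le hsub hcardle
        by_contra hcon
        have hwi : (w i : ℕ) < (i:ℕ) - p := by omega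
        have hmem : i ∈ (univ.filter (fun x : Fin (m+p) => (w x : ℕ) < (i:ℕ)-p)) := by
          simp only [mem_filter, mem_univ, true_and]
          exact hwi
        rw [← heqset] at hmem
        simp only [mem_filter, mem_univ, true_and, Fin.le_def, hiv] at hmem
        omega
      · omega
    exact ⟨by omega, by omega⟩
end

section
/- The map w ↦ w₀ᴺ ∘ w, where w₀ᴺ is the longest element of S_N, is a bijection from the set of restricted permutations {w ∈ S_N : -p ≤ w(i)-i ≤ m for all i} onto the Bruhat interval {v ∈ S_N : v ≥ (w₀ᵖ, w₀ᵐ)}, where (w₀ᵖ, w₀ᵐ) is the permutation acting as the longest element of S_p on {1,...,p} and as the longest element of S_m on {p+1,...,p+m}. -/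
section Aux
open Finset

lemma card_filter_le_perm {n : ℕ} (v : Equiv.Perm (Fin n)) (j : Fin n) :
    (univ.filter fun a => j ≤ v a).card = n - j := by
  have h : (univ.filter fun a => j ≤ v a) = (Finset.Ici j).map v.symm.toEmbedding := by
    ext a
    simp only [mem_filter, mem_univ, true_and, Finset.mem_map, Finset.mem_Ici,
      Equiv.coe_toEmbedding]
    constructor
    · intro h; exact ⟨v a, h, v.symm_apply_apply a⟩
    · rintro ⟨b, hb, rfl⟩; simpa using hb
  rw [h, Finset.card_map, Fin.card_Ici]

lemma key_forward (m p : ℕ) (hm : 0 < m) (hp : 0 < p)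
    (w₀pm : Equiv.Perm (Fin (m + p)))
    (hw₀pm : ∀ i : Fin (m + p), ((w₀pm i : ℕ)) =
      if (i : ℕ) < p then p - 1 - (i : ℕ) else m + p - 1 - ((i : ℕ) - p))
    (v : Equiv.Perm (Fin (m + p))) (h : BruhatLE w₀pm v) (a : Fin (m + p)) :
    p ≤ (v a : ℕ) + (a : ℕ) + 1 ∧ (v a : ℕ) + (a : ℕ) + 1 ≤ m + 2 * p := by
  constructor
  · by_contra hc
    push_neg at hc
    have hva : (v a : ℕ) + 1 < m + p := by omega
    set j : Fin (m + p) := ⟨(v a : ℕ) + 1, hva⟩ with hj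
    have h1 : (univ.filter fun b => b ≤ a ∧ j ≤ w₀pm b) = Finset.Iic a := by
      ext b
      simp only [mem_filter, mem_univ, true_and, Finset.mem_Iic, and_iff_left_iff_imp]
      intro hb
      have hb' : (b : ℕ) ≤ (a : ℕ) := hb
      rw [Fin.le_def, hw₀pm b]
      have hbp : (b : ℕ) < p := by omega
      rw [if_pos hbp]
      show (v a : ℕ) + 1 ≤ p - 1 - (b : ℕ)
      omega
    have hcard1 : (univ.filter fun b => b ≤ a ∧ j ≤ w₀pm b).card = (a : ℕ) + 1 := by
      rw [h1, Fin.card_Iic]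
    have h2 : (univ.filter fun b => b ≤ a ∧ j ≤ v b) ⊆ Finset.Iio a := by
      intro b hb
      simp only [mem_filter, mem_univ, true_and] at hb
      obtain ⟨hba, hjb⟩ := hb
      rw [Finset.mem_Iio]
      refine lt_of_le_of_ne hba fun he => ?_
      subst he
      have : (v b : ℕ) + 1 ≤ (v b : ℕ) := hjb
      omega
    have hcard2 : (univ.filter fun b => b ≤ a ∧ j ≤ v b).card ≤ (a : ℕ) :=
      le_trans (Finset.card_le_card h2) (le_of_eq (Fin.card_Iio a))
    have := h a j
    omega
  · by_contra hc
    push_neg at hc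
    have hva : (v a : ℕ) < m + p := (v a).is_lt
    have haa : (a : ℕ) < m + p := a.is_lt
    have hage : 1 ≤ (a : ℕ) := by omega
    set i : Fin (m + p) := ⟨(a : ℕ) - 1, by omega⟩ with hi
    set j : Fin (m + p) := v a with hjdef
    have h1 : (univ.filter fun b => b ≤ i ∧ j ≤ w₀pm b) = univ.filter fun b => j ≤ w₀pm b := by
      ext b
      simp only [mem_filter, mem_univ, true_and, and_iff_right_iff_imp]
      intro hjb
      rw [Fin.le_def] at hjb ⊢
      rw [hw₀pm b] at hjb
      show (b : ℕ) ≤ (a : ℕ) - 1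
      have hbb : (b : ℕ) < m + p := b.is_lt
      by_cases hbp : (b : ℕ) < p
      · rw [if_pos hbp] at hjb; omega
      · rw [if_neg hbp] at hjb; omega
    have hcard1 : (univ.filter fun b => b ≤ i ∧ j ≤ w₀pm b).card = m + p - (v a : ℕ) := by
      rw [h1, card_filter_le_perm]
    have h2 : (univ.filter fun b => b ≤ i ∧ j ≤ v b) ⊆
        (univ.filter fun b => j ≤ v b).erase a := by
      intro b hb
      simp only [mem_filter, mem_univ, true_and] at hb
      obtain ⟨hbi, hjb⟩ := hb
      rw [Finset.mem_erase]
      refine ⟨fun he => ?_, by simp [hjb]⟩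
      rw [he] at hbi
      have : (a : ℕ) ≤ (a : ℕ) - 1 := hbi
      omega
    have hmem : a ∈ univ.filter fun b => j ≤ v b := by simp [hjdef]
    have hcard2 : (univ.filter fun b => b ≤ i ∧ j ≤ v b).card ≤ m + p - (v a : ℕ) - 1 := by
      calc _ ≤ ((univ.filter fun b => j ≤ v b).erase a).card := Finset.card_le_card h2
        _ = (univ.filter fun b => j ≤ v b).card - 1 := Finset.card_erase_of_mem hmem
        _ = m + p - (v a : ℕ) - 1 := by rw [card_filter_le_perm]
    have := h i j
    omega

lemma card_filter_le_perm' {n : ℕ} (v : Equiv.Perm (Fin n)) (j : Fin n) :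
    (univ.filter fun a => j ≤ v a).card = n - j := by
  have h : (univ.filter fun a => j ≤ v a) = (Finset.Ici j).map v.symm.toEmbedding := by
    ext a
    simp only [mem_filter, mem_univ, true_and, Finset.mem_map, Finset.mem_Ici,
      Equiv.coe_toEmbedding]
    constructor
    · intro h; exact ⟨v a, h, v.symm_apply_apply a⟩
    · rintro ⟨b, hb, rfl⟩; simpa using hb
  rw [h, Finset.card_map, Fin.card_Ici]

lemma card_filter_lt_perm' {n : ℕ} (v : Equiv.Perm (Fin n)) (j : Fin n) :
    (univ.filter fun a => v a < j).card = j := by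
  have h : (univ.filter fun a => v a < j) = (Finset.Iio j).map v.symm.toEmbedding := by
    ext a
    simp only [mem_filter, mem_univ, true_and, Finset.mem_map, Finset.mem_Iio,
      Equiv.coe_toEmbedding]
    constructor
    · intro h; exact ⟨v a, h, v.symm_apply_apply a⟩
    · rintro ⟨b, hb, rfl⟩; simpa using hb
  rw [h, Finset.card_map, Fin.card_Iio]

lemma bound_A' {n : ℕ} (v : Equiv.Perm (Fin n)) (i j : Fin n) :
    (i : ℕ) + 1 ≤ (univ.filter fun a => a ≤ i ∧ j ≤ v a).card + j := by
  have hsub : Finset.Iic i ⊆ (univ.filter fun a => a ≤ i ∧ j ≤ v a) ∪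
      (univ.filter fun a => v a < j) := by
    intro b hb
    simp only [Finset.mem_Iic] at hb
    rcases lt_or_ge (v b) j with h | h
    · exact Finset.mem_union_right _ (by simp [h])
    · exact Finset.mem_union_left _ (by simp [hb, h])
  calc (i : ℕ) + 1 = (Finset.Iic i).card := (Fin.card_Iic i).symm
    _ ≤ _ := Finset.card_le_card hsub
    _ ≤ _ := Finset.card_union_le _ _
    _ = _ := by rw [card_filter_lt_perm']

lemma key_backward (m p : ℕ) (hm : 0 < m) (hp : 0 < p)
    (w₀pm : Equiv.Perm (Fin (m + p)))
    (hw₀pm : ∀ i : Fin (m + p), ((w₀pm i : ℕ)) =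
      if (i : ℕ) < p then p - 1 - (i : ℕ) else m + p - 1 - ((i : ℕ) - p))
    (v : Equiv.Perm (Fin (m + p)))
    (hb : ∀ a : Fin (m + p), p ≤ (v a : ℕ) + (a : ℕ) + 1 ∧ (v a : ℕ) + (a : ℕ) + 1 ≤ m + 2 * p) :
    BruhatLE w₀pm v := by
  intro i j
  have hjlt : (j : ℕ) < m + p := j.is_lt
  have hilt : (i : ℕ) < m + p := i.is_lt
  rcases lt_or_ge (j : ℕ) p with hjp | hjp
  · rcases lt_or_ge (i : ℕ) p with hip | hip
    · -- j < p, i < p : L ⊆ Iic c ⊆ ... and Iic c ⊆ R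
      set c : ℕ := min (i : ℕ) (p - 1 - (j : ℕ)) with hc
      have hclt : c < m + p := by omega
      have hL : (univ.filter fun b => b ≤ i ∧ j ≤ w₀pm b) ⊆ Finset.Iic (⟨c, hclt⟩ : Fin (m+p)) := by
        intro b hbmem
        simp only [mem_filter, mem_univ, true_and] at hbmem
        obtain ⟨hbi, hjb⟩ := hbmem
        have hbi' : (b : ℕ) ≤ (i : ℕ) := hbi
        have hjb' : (j : ℕ) ≤ (w₀pm b : ℕ) := hjb
        rw [hw₀pm b, if_pos (by omega : (b : ℕ) < p)] at hjb'
        rw [Finset.mem_Iic, Fin.le_def]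
        show (b : ℕ) ≤ c
        omega
      have hR : Finset.Iic (⟨c, hclt⟩ : Fin (m+p)) ⊆ univ.filter fun b => b ≤ i ∧ j ≤ v b := by
        intro b hbmem
        rw [Finset.mem_Iic, Fin.le_def] at hbmem
        have hbc : (b : ℕ) ≤ c := hbmem
        have hlow := (hb b).1
        simp only [mem_filter, mem_univ, true_and]
        exact ⟨by rw [Fin.le_def]; omega, by rw [Fin.le_def]; omega⟩
      calc (univ.filter fun b => b ≤ i ∧ j ≤ w₀pm b).card ≤ _ := Finset.card_le_card hL
        _ ≤ _ := Finset.card_le_card hR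
    · -- j < p, i ≥ p
      have hplt : p < m + p := by omega
      have hplt2 : p - 1 - (j : ℕ) < m + p := by omega
      have hL : (univ.filter fun b => b ≤ i ∧ j ≤ w₀pm b) ⊆
          Finset.Iic (⟨p - 1 - (j : ℕ), hplt2⟩ : Fin (m+p)) ∪
          Finset.Icc (⟨p, hplt⟩ : Fin (m+p)) i := by
        intro b hbmem
        simp only [mem_filter, mem_univ, true_and] at hbmem
        obtain ⟨hbi, hjb⟩ := hbmem
        have hbi' : (b : ℕ) ≤ (i : ℕ) := hbi
        have hjb' : (j : ℕ) ≤ (w₀pm b : ℕ) := hjb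
        by_cases hbp : (b : ℕ) < p
        · rw [hw₀pm b, if_pos hbp] at hjb'
          refine Finset.mem_union_left _ ?_
          rw [Finset.mem_Iic, Fin.le_def]
          show (b : ℕ) ≤ p - 1 - (j : ℕ)
          omega
        · refine Finset.mem_union_right _ ?_
          rw [Finset.mem_Icc]
          exact ⟨by rw [Fin.le_def]; show p ≤ (b : ℕ); omega, hbi⟩
      have hLcard : (univ.filter fun b => b ≤ i ∧ j ≤ w₀pm b).card ≤
          (p - 1 - (j : ℕ) + 1) + ((i : ℕ) + 1 - p) := by
        calc _ ≤ _ := Finset.card_le_card hL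
          _ ≤ _ := Finset.card_union_le _ _
          _ = _ := by rw [Fin.card_Iic, Fin.card_Icc]
      have hA := bound_A' v i j
      omega
  · rcases lt_or_ge (i : ℕ) p with hip | hip
    · -- j ≥ p, i < p : L is empty
      have hL : (univ.filter fun b => b ≤ i ∧ j ≤ w₀pm b) = ∅ := by
        refine Finset.eq_empty_of_forall_notMem fun b hbmem => ?_
        simp only [mem_filter, mem_univ, true_and] at hbmem
        obtain ⟨hbi, hjb⟩ := hbmem
        have hbi' : (b : ℕ) ≤ (i : ℕ) := hbi
        have hjb' : (j : ℕ) ≤ (w₀pm b : ℕ) := hjb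
        rw [hw₀pm b, if_pos (by omega : (b : ℕ) < p)] at hjb'
        omega
      rw [hL]
      simp
    · -- j ≥ p, i ≥ p
      set K : ℕ := m + 2 * p - 1 - (j : ℕ) with hK
      have hKlt : K < m + p := by omega
      have hKp : p ≤ K := by omega
      have hS : ∀ b : Fin (m + p), j ≤ v b → (b : ℕ) ≤ K := by
        intro b hjb
        have hjb' : (j : ℕ) ≤ (v b : ℕ) := hjb
        have hup := (hb b).2
        omega
      rcases le_or_gt K (i : ℕ) with hKi | hKi
      · have hReq : (univ.filter fun b => b ≤ i ∧ j ≤ v b) = univ.filter fun b => j ≤ v b := by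
          ext b
          simp only [mem_filter, mem_univ, true_and, and_iff_right_iff_imp]
          intro hjb
          rw [Fin.le_def]
          have := hS b hjb
          omega
        have hL : (univ.filter fun b => b ≤ i ∧ j ≤ w₀pm b) ⊆ univ.filter fun b => j ≤ w₀pm b := by
          intro b hbmem
          simp only [mem_filter, mem_univ, true_and] at hbmem ⊢
          exact hbmem.2
        calc (univ.filter fun b => b ≤ i ∧ j ≤ w₀pm b).card
            ≤ (univ.filter fun b => j ≤ w₀pm b).card := Finset.card_le_card hL
          _ = m + p - (j : ℕ) := card_filter_le_perm' w₀pm j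
          _ = (univ.filter fun b => j ≤ v b).card := (card_filter_le_perm' v j).symm
          _ = _ := by rw [hReq]
      · have hplt : p < m + p := by omega
        have hL : (univ.filter fun b => b ≤ i ∧ j ≤ w₀pm b) ⊆
            Finset.Icc (⟨p, hplt⟩ : Fin (m+p)) i := by
          intro b hbmem
          simp only [mem_filter, mem_univ, true_and] at hbmem
          obtain ⟨hbi, hjb⟩ := hbmem
          have hbi' : (b : ℕ) ≤ (i : ℕ) := hbi
          have hjb' : (j : ℕ) ≤ (w₀pm b : ℕ) := hjb
          have hbp : ¬ (b : ℕ) < p := by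
            intro hbp
            rw [hw₀pm b, if_pos hbp] at hjb'
            omega
          rw [Finset.mem_Icc]
          exact ⟨by rw [Fin.le_def]; show p ≤ (b : ℕ); omega, hbi⟩
        have hLcard : (univ.filter fun b => b ≤ i ∧ j ≤ w₀pm b).card ≤ (i : ℕ) + 1 - p := by
          calc _ ≤ _ := Finset.card_le_card hL
            _ = _ := Fin.card_Icc _ _
        -- lower bound on R
        have hi1lt : (i : ℕ) + 1 < m + p := by omega
        have hReq : (univ.filter fun b => b ≤ i ∧ j ≤ v b) =
            (univ.filter fun b => j ≤ v b).filter (fun b => b ≤ i) := by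
          ext b
          simp only [mem_filter, mem_univ, true_and]
          tauto
        have hsplit := Finset.card_filter_add_card_filter_not
          (s := univ.filter fun b => j ≤ v b) (p := fun b => b ≤ i)
        have hneg : ((univ.filter fun b => j ≤ v b).filter fun b => ¬ b ≤ i) ⊆
            Finset.Icc (⟨(i : ℕ) + 1, hi1lt⟩ : Fin (m+p)) (⟨K, hKlt⟩ : Fin (m+p)) := by
          intro b hbmem
          simp only [mem_filter, mem_univ, true_and] at hbmem
          obtain ⟨hjb, hnbi⟩ := hbmem
          rw [Fin.le_def, not_le] at hnbi
          rw [Finset.mem_Icc]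
          refine ⟨by rw [Fin.le_def]; show (i : ℕ) + 1 ≤ (b : ℕ); omega,
            by rw [Fin.le_def]; show (b : ℕ) ≤ K; exact hS b hjb⟩
        have hnegcard : ((univ.filter fun b => j ≤ v b).filter fun b => ¬ b ≤ i).card ≤
            K + 1 - ((i : ℕ) + 1) := by
          calc _ ≤ _ := Finset.card_le_card hneg
            _ = _ := Fin.card_Icc _ _
        have hScard : (univ.filter fun b => j ≤ v b).card = m + p - (j : ℕ) :=
          card_filter_le_perm' v j
        rw [hScard, ← hReq] at hsplit
        have hnegcard' : ((univ.filter fun b => j ≤ v b).filter fun b => ¬ b ≤ i).card ≤ K - (i : ℕ) := by omega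
        omega

end Aux

/-- The map `w ↦ w₀ᴺ ∘ w`, where `w₀ᴺ` is the longest element of `S_N`
(`w₀ᴺ(i) = N+1-i`, i.e. `i ↦ N-1-i` in 0-based indexing), is a bijection from the set
of restricted permutations `{w : -p ≤ w(i)-i ≤ m for all i}` onto the Bruhat interval
`{v : v ≥ (w₀ᵖ, w₀ᵐ)}`, where `(w₀ᵖ, w₀ᵐ)` acts as the longest element of `S_p` on the
first block and as the longest element of `S_m` on the second block. -/
theorem restricted_bij_bruhat_interval (m p : ℕ) (hm : 0 < m) (hp : 0 < p)
    (w₀N : Equiv.Perm (Fin (m + p)))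
    (hw₀N : ∀ i : Fin (m + p), ((w₀N i : ℕ)) = m + p - 1 - (i : ℕ))
    (w₀pm : Equiv.Perm (Fin (m + p)))
    (hw₀pm : ∀ i : Fin (m + p), ((w₀pm i : ℕ)) =
      if (i : ℕ) < p then p - 1 - (i : ℕ) else m + p - 1 - ((i : ℕ) - p)) :
    Set.BijOn (fun w => w₀N * w)
      {w : Equiv.Perm (Fin (m + p)) |
        ∀ i : Fin (m + p), -(p : ℤ) ≤ ((w i : ℕ) : ℤ) - ((i : ℕ) : ℤ) ∧
          ((w i : ℕ) : ℤ) - ((i : ℕ) : ℤ) ≤ (m : ℤ)}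
      {v : Equiv.Perm (Fin (m + p)) | BruhatLE w₀pm v} := by

  have hinv : ∀ x : Fin (m + p), w₀N (w₀N x) = x := by
    intro x
    have h1 := hw₀N x
    have h2 := hw₀N (w₀N x)
    have h3 : (x : ℕ) < m + p := x.is_lt
    apply Fin.ext
    omega
  have hinv2 : w₀N * w₀N = 1 := Equiv.ext fun x => by
    rw [Equiv.Perm.mul_apply, hinv, Equiv.Perm.one_apply]
  refine ⟨?_, ?_, ?_⟩
  · intro w hw
    simp only [Set.mem_setOf_eq] at hw ⊢
    apply key_backward m p hm hp w₀pm hw₀pm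
    intro a
    have hwa := hw a
    have h1 : ((( w₀N * w) a : Fin (m+p)) : ℕ) = m + p - 1 - ((w a : Fin (m+p)) : ℕ) := by
      rw [Equiv.Perm.mul_apply, hw₀N]
    have h2 : ((w a : Fin (m+p)) : ℕ) < m + p := (w a).is_lt
    have h3 : (a : ℕ) < m + p := a.is_lt
    constructor <;> omega
  · intro w1 _ w2 _ heq
    exact mul_left_cancel heq
  · intro v hv
    simp only [Set.mem_setOf_eq] at hv
    refine ⟨w₀N * v, ?_, ?_⟩
    · simp only [Set.mem_setOf_eq]
      intro a
      have hk := key_forward m p hm hp w₀pm hw₀pm v hv a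
      have h1 : ((( w₀N * v) a : Fin (m+p)) : ℕ) = m + p - 1 - ((v a : Fin (m+p)) : ℕ) := by
        rw [Equiv.Perm.mul_apply, hw₀N]
      have h2 : ((v a : Fin (m+p)) : ℕ) < m + p := (v a).is_lt
      have h3 : (a : ℕ) < m + p := a.is_lt
      constructor <;> omega
    · show w₀N * (w₀N * v) = v
      rw [← mul_assoc, hinv2, one_mul]
end

section
/- Let K₁ ⊆ K₂ be infinite fields and A a Noetherian K₂-algebra with a rational action of the torus H₂ = (K₂^×)^r by K₂-algebra automorphisms. Let H₁ = (K₁^×)^r act by restriction. Then the H₁-prime ideals of A coincide with the H₂-prime ideals of A. -/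
open Finset Polynomial

lemma exists_not_root_of_unity (K : Type*) [Field K] [Infinite K] {n : ℤ} (hn : n ≠ 0) :
    ∃ t : Kˣ, t ^ n ≠ 1 := by
  set m : ℕ := n.natAbs with hm
  have hm0 : m ≠ 0 := Int.natAbs_ne_zero.mpr hn
  obtain ⟨x, hx0, hxm⟩ : ∃ x : K, x ≠ 0 ∧ x ^ m ≠ 1 := by
    have hp : (X * (X ^ m - 1) : K[X]) ≠ 0 := by
      apply mul_ne_zero X_ne_zero
      intro h
      have := congrArg (Polynomial.eval 0) h
      simp [zero_pow hm0] at this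
    have hfin := Polynomial.finite_setOf_isRoot hp
    obtain ⟨x, -, hx⟩ := Set.Infinite.exists_notMem_finite (Set.infinite_univ (α := K)) hfin
    refine ⟨x, ?_, ?_⟩ <;> intro h <;> apply hx <;>
      simp [Polynomial.IsRoot, h, sub_eq_zero, zero_pow hm0]
  refine ⟨Units.mk0 x hx0, fun h => hxm ?_⟩
  have h2 : (Units.mk0 x hx0) ^ m = 1 := by
    rcases Int.natAbs_eq n with he | he
    · rw [he, zpow_natCast] at h; exact_mod_cast h
    · rw [he, zpow_neg, zpow_natCast, inv_eq_one] at h; exact h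
  calc x ^ m = ((Units.mk0 x hx0 : Kˣ) : K) ^ m := rfl
    _ = (((Units.mk0 x hx0) ^ m : Kˣ) : K) := by rw [Units.val_pow_eq_pow_val]
    _ = 1 := by rw [h2]; rfl

noncomputable def torusChar (K₁ K₂ : Type*) [Field K₁] [Field K₂] [Algebra K₁ K₂] {r : ℕ}
    (e : Fin r → ℤ) : (Fin r → K₁ˣ) →* K₂ :=
  (Units.coeHom K₂).comp <| MonoidHom.mk'
    (fun h => ∏ j, (Units.map (algebraMap K₁ K₂ : K₁ →* K₂) (h j)) ^ (e j))
    (by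
      intro a b
      rw [← Finset.prod_mul_distrib]
      exact Finset.prod_congr rfl fun j _ => by
        rw [Pi.mul_apply, map_mul, mul_zpow])

lemma torusChar_apply {K₁ K₂ : Type*} [Field K₁] [Field K₂] [Algebra K₁ K₂] {r : ℕ}
    (e : Fin r → ℤ) (h : Fin r → K₁ˣ) :
    torusChar K₁ K₂ e h
      = ∏ j, ((Units.map (algebraMap K₁ K₂ : K₁ →* K₂) (h j) : K₂ˣ) : K₂) ^ (e j) := by
  simp only [torusChar, MonoidHom.comp_apply, MonoidHom.mk'_apply, Units.coeHom_apply,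
    Units.coe_prod, Units.val_zpow_eq_zpow_val]

lemma torusChar_injective {K₁ K₂ : Type*} [Field K₁] [Field K₂] [Algebra K₁ K₂] [Infinite K₁]
    {r : ℕ} : Function.Injective (torusChar K₁ K₂ (r := r)) := by
  intro e e' hee
  funext j
  by_contra hj
  have hn : e j - e' j ≠ 0 := sub_ne_zero.mpr hj
  obtain ⟨t, ht⟩ := exists_not_root_of_unity K₁ hn
  apply ht
  set φ : K₁ →* K₂ := (algebraMap K₁ K₂ : K₁ →* K₂)
  have hφ : Function.Injective φ := (algebraMap K₁ K₂).injective
  set h : Fin r → K₁ˣ := Function.update (1 : Fin r → K₁ˣ) j t with hdef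
  have hval : ∀ e'' : Fin r → ℤ, torusChar K₁ K₂ e'' h
      = ((Units.map φ t : K₂ˣ) : K₂) ^ (e'' j) := by
    intro e''
    rw [torusChar_apply]
    rw [Finset.prod_eq_single j (fun k _ hk => ?_) (fun hj' => absurd (Finset.mem_univ j) hj')]
    · rw [show h j = t from Function.update_self _ _ _]
    · have : h k = 1 := Function.update_of_ne hk _ _
      rw [this]
      simp
  have h1 : ((Units.map φ t : K₂ˣ) : K₂) ^ (e j) = ((Units.map φ t : K₂ˣ) : K₂) ^ (e' j) := by
    rw [← hval, ← hval, hee]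
  have hu : (Units.map φ t : K₂ˣ) ^ (e j - e' j) = 1 := by
    apply Units.ext
    rw [Units.val_zpow_eq_zpow_val, Units.val_one, zpow_sub₀ (Units.ne_zero _), h1,
      div_self (zpow_ne_zero _ (Units.ne_zero _))]
  have : Units.map φ (t ^ (e j - e' j)) = Units.map φ 1 := by
    rw [map_zpow, hu, map_one]
  exact Units.map_injective hφ this

lemma invariant_extend {K₁ K₂ A : Type*} [Field K₁] [Field K₂] [Infinite K₁]
    [Algebra K₁ K₂] [Ring A] [Algebra K₂ A] {r : ℕ}
    (ρ : (Fin r → K₂ˣ) →* (A ≃ₐ[K₂] A))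
    {ι : Type*} (bs : Module.Basis ι K₂ A) (d : ι → Fin r → ℤ)
    (hrational : ∀ (i : ι) (h : Fin r → K₂ˣ),
      ρ h (bs i) = (∏ j : Fin r, ((h j : K₂) ^ (d i j))) • bs i)
    (S : Submodule K₂ A)
    (hS : ∀ h₁ : Fin r → K₁ˣ, ∀ x ∈ S,
      ρ (fun j => Units.map (algebraMap K₁ K₂ : K₁ →* K₂) (h₁ j)) x ∈ S)
    (h : Fin r → K₂ˣ) {x : A} (hx : x ∈ S) : ρ h x ∈ S := by
  classical
  set c := bs.repr x with hc
  set s := c.support with hs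
  set E := s.image d with hE
  set xe : (Fin r → ℤ) → A := fun e => ∑ i ∈ s.filter (fun i => d i = e), c i • bs i with hxe
  have hsum : ∀ g : Fin r → K₂ˣ,
      ρ g x = ∑ e ∈ E, (∏ j, ((g j : K₂) ^ (e j))) • xe e := by
    intro g
    have hxs : x = ∑ i ∈ s, c i • bs i := by
      conv_lhs => rw [← bs.linearCombination_repr x]
      rw [Finsupp.linearCombination_apply, Finsupp.sum]
    calc ρ g x = ∑ i ∈ s, c i • ρ g (bs i) := by
          conv_lhs => rw [hxs]
          rw [map_sum]
          exact Finset.sum_congr rfl fun i _ => map_smul _ _ _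
      _ = ∑ i ∈ s, (∏ j, ((g j : K₂) ^ (d i j))) • (c i • bs i) := by
          refine Finset.sum_congr rfl fun i _ => ?_
          rw [hrational i g, smul_comm]
      _ = ∑ e ∈ E, ∑ i ∈ s.filter (fun i => d i = e),
            (∏ j, ((g j : K₂) ^ (d i j))) • (c i • bs i) := by
          rw [Finset.sum_fiberwise_of_maps_to (fun i hi => Finset.mem_image_of_mem d hi)]
      _ = ∑ e ∈ E, (∏ j, ((g j : K₂) ^ (e j))) • xe e := by
          refine Finset.sum_congr rfl fun e he => ?_
          rw [hxe, Finset.smul_sum]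
          refine Finset.sum_congr rfl fun i hi => ?_
          rw [(Finset.mem_filter.mp hi).2]
  set emb : (Fin r → K₁ˣ) → (Fin r → K₂ˣ) :=
    fun h₁ j => Units.map (algebraMap K₁ K₂ : K₁ →* K₂) (h₁ j) with hemb
  set V : Submodule K₂ A := Submodule.span K₂ (Set.range fun h₁ : Fin r → K₁ˣ => ρ (emb h₁) x)
    with hV
  have hVS : V ≤ S := Submodule.span_le.mpr (by rintro _ ⟨h₁, rfl⟩; exact hS h₁ x hx)
  have hcomp : ∀ e ∈ E, xe e ∈ V := by
    intro e he
    have hπ : ∀ f : Module.Dual K₂ (A ⧸ V), f (V.mkQ (xe e)) = 0 := by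
      intro f
      have hfun : ∑ e' ∈ E, (f (V.mkQ (xe e'))) •
          ((torusChar K₁ K₂ e') : (Fin r → K₁ˣ) → K₂) = 0 := by
        funext h₁
        have hmem : ρ (emb h₁) x ∈ V := Submodule.subset_span ⟨h₁, rfl⟩
        have h0 : V.mkQ (ρ (emb h₁) x) = 0 := (Submodule.Quotient.mk_eq_zero V).mpr hmem
        have hcoef : ∀ e' : Fin r → ℤ,
            (∏ j, (((emb h₁) j : K₂) ^ (e' j))) = torusChar K₁ K₂ e' h₁ := by
          intro e'
          rw [torusChar_apply]
        have key0 : ∑ e' ∈ E, (∏ j, (((emb h₁) j : K₂) ^ (e' j))) * f (V.mkQ (xe e')) = 0 := by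
          calc ∑ e' ∈ E, (∏ j, (((emb h₁) j : K₂) ^ (e' j))) * f (V.mkQ (xe e'))
              = f (V.mkQ (∑ e' ∈ E, (∏ j, (((emb h₁) j : K₂) ^ (e' j))) • xe e')) := by
                rw [map_sum, map_sum]
                exact (Finset.sum_congr rfl fun e' _ => by
                  rw [map_smul, map_smul, smul_eq_mul]).symm
            _ = f (V.mkQ (ρ (emb h₁) x)) := by rw [← hsum (emb h₁)]
            _ = 0 := by rw [h0, map_zero]
        calc (∑ e' ∈ E, (f (V.mkQ (xe e'))) •
              ((torusChar K₁ K₂ e') : (Fin r → K₁ˣ) → K₂)) h₁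
            = ∑ e' ∈ E, (f (V.mkQ (xe e'))) * torusChar K₁ K₂ e' h₁ := by
              simp [Finset.sum_apply]
          _ = ∑ e' ∈ E, (∏ j, (((emb h₁) j : K₂) ^ (e' j))) * f (V.mkQ (xe e')) := by
              refine Finset.sum_congr rfl fun e' _ => ?_
              rw [hcoef, mul_comm]
          _ = 0 := key0
      have li : LinearIndependent K₂
          (fun e' : Fin r → ℤ => ((torusChar K₁ K₂ e') : (Fin r → K₁ˣ) → K₂)) :=
        (linearIndependent_monoidHom (Fin r → K₁ˣ) K₂).comp
          (torusChar K₁ K₂ (r := r)) torusChar_injective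
      exact linearIndependent_iff'.mp li E (fun e' => f (V.mkQ (xe e'))) hfun e he
    have : V.mkQ (xe e) = 0 := (Module.forall_dual_apply_eq_zero_iff K₂ _).mp hπ
    exact (Submodule.Quotient.mk_eq_zero V).mp this
  rw [hsum h]
  exact Submodule.sum_mem _ fun e he => Submodule.smul_mem _ _ (hVS (hcomp e he))


/-- `P` is an `H`-prime ideal of `A` for the subgroup (subset) `T` of the torus acting
via `ρ`:  `P` is a proper, two-sided, `T`-invariant ideal such that whenever `I, J` are
two-sided `T`-invariant ideals with `IJ ⊆ P`, then `I ⊆ P` or `J ⊆ P`.  (Ideals here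
are left ideals together with an explicit right-multiplication-closure condition, i.e.
two-sided ideals.) -/
def IsHPrimeIdeal {K₂ A : Type*} [Field K₂] [Ring A] [Algebra K₂ A] {r : ℕ}
    (ρ : (Fin r → K₂ˣ) →* (A ≃ₐ[K₂] A)) (T : Set (Fin r → K₂ˣ)) (P : Ideal A) : Prop :=
  P ≠ ⊤ ∧ (∀ x ∈ P, ∀ a : A, x * a ∈ P) ∧ (∀ h ∈ T, ∀ x ∈ P, ρ h x ∈ P) ∧
  ∀ I J : Ideal A,
    (∀ x ∈ I, ∀ a : A, x * a ∈ I) → (∀ x ∈ J, ∀ a : A, x * a ∈ J) →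
    (∀ h ∈ T, ∀ x ∈ I, ρ h x ∈ I) → (∀ h ∈ T, ∀ x ∈ J, ρ h x ∈ J) →
    (∀ x ∈ I, ∀ y ∈ J, x * y ∈ P) → I ≤ P ∨ J ≤ P

/-- Let `K₁ ⊆ K₂` be infinite fields and `A` a Noetherian `K₂`-algebra
with a rational action of the torus `H₂ = (K₂^×)^r` by `K₂`-algebra automorphisms
(rationality is witnessed by a basis of eigenvectors whose eigenvalues are rational
characters `h ↦ ∏ h_j^{d_j}`).  Let `H₁ = (K₁^×)^r` act by restriction.  Then the
`H₁`-prime ideals of `A` coincide with the `H₂`-prime ideals of `A`. -/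
theorem H1_primes_eq_H2_primes {K₁ K₂ A : Type*} [Field K₁] [Field K₂] [Infinite K₁]
    [Algebra K₁ K₂] [Ring A] [Algebra K₂ A] [IsNoetherianRing A] {r : ℕ}
    (ρ : (Fin r → K₂ˣ) →* (A ≃ₐ[K₂] A))
    {ι : Type*} (bs : Module.Basis ι K₂ A) (d : ι → Fin r → ℤ)
    (hrational : ∀ (i : ι) (h : Fin r → K₂ˣ),
      ρ h (bs i) = (∏ j : Fin r, ((h j : K₂) ^ (d i j))) • bs i)
    (P : Ideal A) :
    IsHPrimeIdeal ρ
        (Set.range (fun (h : Fin r → K₁ˣ) (j : Fin r) =>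
          Units.map (algebraMap K₁ K₂ : K₁ →* K₂) (h j))) P ↔
      IsHPrimeIdeal ρ Set.univ P := by
  have key : ∀ I : Ideal A,
      (∀ h₁ : Fin r → K₁ˣ, ∀ x ∈ I,
        ρ (fun j => Units.map (algebraMap K₁ K₂ : K₁ →* K₂) (h₁ j)) x ∈ I) →
      ∀ h : Fin r → K₂ˣ, ∀ x ∈ I, ρ h x ∈ I := fun I hI h x hx =>
    invariant_extend ρ bs d hrational (I.restrictScalars K₂) hI h hx
  constructor
  · rintro ⟨h1, h2, h3, h4⟩
    refine ⟨h1, h2, ?_, ?_⟩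
    · intro h _ x hx
      exact key P (fun h₁ x hx => h3 _ ⟨h₁, rfl⟩ x hx) h x hx
    · intro I J hI hJ hIinv hJinv hIJ
      exact h4 I J hI hJ
        (fun h _ x hx => hIinv h (Set.mem_univ h) x hx)
        (fun h _ x hx => hJinv h (Set.mem_univ h) x hx) hIJ
  · rintro ⟨h1, h2, h3, h4⟩
    refine ⟨h1, h2, fun h _ x hx => h3 h (Set.mem_univ h) x hx, ?_⟩
    intro I J hI hJ hIinv hJinv hIJ
    exact h4 I J hI hJ
      (fun h _ x hx => key I (fun h₁ x hx => hIinv _ ⟨h₁, rfl⟩ x hx) h x hx)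
      (fun h _ x hx => key J (fun h₁ x hx => hJinv _ ⟨h₁, rfl⟩ x hx) h x hx) hIJ
end
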